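/- The cardinality of the set of 312-avoiding TITOs equals the cardinality of the set of 312-avoiding real TITOs plus n times the (n − 1)-st Catalan number, i.e., |{312-avoiding TITOs}| = |{312-avoiding real TITOs}| + n · Catalan(n − 1), where Catalan(m) = C(2m, m)/(m + 1). -/

import Mathlib

structure TITO (n : ℕ) where
  rel : ℤ → ℤ → Prop
  refl : ∀ a, rel a a
  antisymm : ∀ a b, rel a b → rel b a → a = b
  trans : ∀ a b c, rel a b → rel b c → rel a c
  total : ∀ a b, rel a b ∨ rel b a
  invariant : ∀ a b, rel a b ↔ rel (a + n) (b + n)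

namespace TITO

variable {n : ℕ}

/-- The inversion set of a TITO. -/
def Inversions (t : TITO n) : Set (ℤ × ℤ) := {p | p.1 < p.2 ∧ t.rel p.2 p.1}

/-- A TITO is 312-avoiding if there are no integers `a < b < c` with `c ≼ a` and `a ≼ b`. -/
def Avoids312 (t : TITO n) : Prop :=
  ¬ ∃ a b c : ℤ, a < b ∧ b < c ∧ t.rel c a ∧ t.rel a b

/-- A TITO is 132-avoiding if there are no integers `a < b < c` with `a ≼ c` and `c ≼ b`. -/
def Avoids132 (t : TITO n) : Prop :=
  ¬ ∃ a b c : ℤ, a < b ∧ b < c ∧ t.rel a c ∧ t.rel c b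

/-- A set is order-convex for a TITO. -/
def OrderConvex (t : TITO n) (S : Set ℤ) : Prop :=
  ∀ x ∈ S, ∀ z ∈ S, ∀ y : ℤ, t.rel x y → t.rel y z → y ∈ S

/-- A block of a TITO: an order-convex set with no minimal and no maximal element in which
all intervals are finite. -/
def IsBlock (t : TITO n) (I : Set ℤ) : Prop :=
  t.OrderConvex I ∧
  (∀ a ∈ I, ∃ b ∈ I, b ≠ a ∧ t.rel b a) ∧
  (∀ a ∈ I, ∃ b ∈ I, b ≠ a ∧ t.rel a b) ∧
  (∀ a ∈ I, ∀ c ∈ I, t.rel a c → {b : ℤ | t.rel a b ∧ t.rel b c}.Finite)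

/-- A block is waxing if `a ≼ a + n` for every `a` in it. -/
def Waxing (t : TITO n) (I : Set ℤ) : Prop := ∀ a ∈ I, t.rel a (a + n)

/-- A block is waning if `a + n ≼ a` for every `a` in it. -/
def Waning (t : TITO n) (I : Set ℤ) : Prop := ∀ a ∈ I, t.rel (a + n) a

/-- A TITO is real if `a ≼ a + n` whenever the residue class of `a` mod `n` is order-convex. -/
def IsReal (t : TITO n) : Prop :=
  ∀ a : ℤ, t.OrderConvex {x : ℤ | ∃ k : ℤ, x = a + k * n} → t.rel a (a + n)

/-- A TITO is co-real if `a + n ≼ a` whenever the residue class of `a` mod `n` is order-convex. -/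
def IsCoReal (t : TITO n) : Prop :=
  ∀ a : ℤ, t.OrderConvex {x : ℤ | ∃ k : ℤ, x = a + k * n} → t.rel (a + n) a

/-- `(a, b)` with `a < b` is a lower wall if `b ≼ a` is a cover relation of the total order. -/
def LowerWall (t : TITO n) (a b : ℤ) : Prop :=
  a < b ∧ t.rel b a ∧ ∀ z : ℤ, z ≠ a → z ≠ b → ¬ (t.rel b z ∧ t.rel z a)

end TITO

/-!
In a 312-avoiding TITO, an element `a` with `a + n ≼ a` lies above every `b > a`, and any other
`a` lies above exactly the `b > a` of an interval `(a, top a]` of length less than `n`; these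
intervals are nested or disjoint. Hence the order is the lexicographic order of
`x ↦ (top x, -x)`, where `top x = ⊤` for the elements of the first kind, and 312-avoiding TITOs
correspond to periodic nested functions `top : ℤ → WithTop ℤ`. Such a TITO fails to be real
exactly when `top⁻¹ ⊤` is one residue class `r + nℤ`; then `top` is determined by `r` and by its
values on the window `r + 1, …, r + n - 1`, which form a nesting function on `n - 1` points.
Nesting functions are counted by the Catalan recursion, splitting off the block of `0`.
-/

lemma Nat.card_and_add_card_and_not {α : Type*} (p q : α → Prop) [Finite {a // p a}] :
    Nat.card {a // p a ∧ q a} + Nat.card {a // p a ∧ ¬ q a} = Nat.card {a // p a} := by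
  classical
  rw [← Nat.card_congr (Equiv.subtypeSubtypeEquivSubtypeInter p q),
    ← Nat.card_congr (Equiv.subtypeSubtypeEquivSubtypeInter p (¬ q ·)), ← Nat.card_sum,
    Nat.card_congr (Equiv.sumCompl _)]

/-- `g i` is the length of the block `[i, i + g i]`; any two blocks are nested or disjoint. -/
def IsNesting (L : ℕ) (g : ℕ → ℕ) : Prop :=
  ∀ i < L, i + g i < L ∧ ∀ j, i < j → j ≤ i + g i → j + g j ≤ i + g i

def shiftRestrict (a m : ℕ) (g : ℕ → ℕ) (i : ℕ) : ℕ := if i < m then g (a + i) else 0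

def glueBlocks (j : ℕ) (u v : ℕ → ℕ) (k : ℕ) : ℕ :=
  if k = 0 then j else if k ≤ j then u (k - 1) else v (k - j - 1)

section Blocks

variable {a m j k : ℕ} {g u v : ℕ → ℕ}

lemma shiftRestrict_of_lt (h : k < m) : shiftRestrict a m g k = g (a + k) := if_pos h

lemma shiftRestrict_of_le (h : m ≤ k) : shiftRestrict a m g k = 0 := if_neg (by omega)

lemma glueBlocks_zero : glueBlocks j u v 0 = j := if_pos rfl

lemma glueBlocks_of_le (h0 : 0 < k) (hk : k ≤ j) : glueBlocks j u v k = u (k - 1) := by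
  simp only [glueBlocks, if_neg (show k ≠ 0 by omega), if_pos hk]

lemma glueBlocks_of_lt (hk : j < k) : glueBlocks j u v k = v (k - j - 1) := by
  simp only [glueBlocks, if_neg (show k ≠ 0 by omega), if_neg (show ¬ k ≤ j by omega)]

end Blocks

namespace IsNesting

variable {L : ℕ} {g : ℕ → ℕ}

lemma shiftRestrict (hg : IsNesting L g) {a m : ℕ} (hL : a + m ≤ L)
    (hclosed : ∀ i, a ≤ i → i < a + m → i + g i < a + m) :
    IsNesting m (shiftRestrict a m g) := by
  intro i hi
  have hnest := (hg (a + i) (by omega)).2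
  have hbound := hclosed (a + i) (by omega) (by omega)
  rw [shiftRestrict_of_lt hi]
  refine ⟨by omega, fun j hij hj => ?_⟩
  rw [shiftRestrict_of_lt (by omega)]
  have := hnest (a + j) (by omega) (by omega)
  omega

lemma glueBlocks {j m : ℕ} {u v : ℕ → ℕ} (hu : IsNesting j u) (hv : IsNesting m v) :
    IsNesting (j + 1 + m) (glueBlocks j u v) := by
  intro i hi
  rcases Nat.eq_zero_or_pos i with rfl | hi0
  · refine ⟨by rw [glueBlocks_zero]; omega, fun k hk hkj => ?_⟩
    rw [glueBlocks_zero] at hkj ⊢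
    rw [glueBlocks_of_le hk (by omega)]
    have := (hu (k - 1) (by omega)).1
    omega
  by_cases hij : i ≤ j
  · have hui := hu (i - 1) (by omega)
    rw [glueBlocks_of_le hi0 hij]
    refine ⟨by omega, fun k hk hkj => ?_⟩
    have := hui.2 (k - 1) (by omega) (by omega)
    rw [glueBlocks_of_le (by omega) (by omega)]
    omega
  · have hvi := hv (i - j - 1) (by omega)
    rw [glueBlocks_of_lt (by omega)]
    refine ⟨by omega, fun k hk hkj => ?_⟩
    have := hvi.2 (k - j - 1) (by omega) (by omega)
    rw [glueBlocks_of_lt (by omega)]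
    omega

end IsNesting

@[ext]
structure NestingFun (L : ℕ) where
  toFun : ℕ → ℕ
  isNesting : IsNesting L toFun
  eq_zero : ∀ i, L ≤ i → toFun i = 0

namespace NestingFun

instance (L : ℕ) : Finite (NestingFun L) :=
  Finite.of_injective
    (fun g (i : Fin L) => (⟨g.toFun i, by have := (g.isNesting i i.2).1; omega⟩ : Fin L))
    fun g g' h => NestingFun.ext <| funext fun i => by
      by_cases hi : i < L
      · simpa using congrFun h ⟨i, hi⟩
      · rw [g.eq_zero i (by omega), g'.eq_zero i (by omega)]

instance : Unique (NestingFun 0) where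
  default := ⟨0, fun i hi => absurd hi (Nat.not_lt_zero i), fun _ _ => rfl⟩
  uniq g := NestingFun.ext <| funext fun i => g.eq_zero i (Nat.zero_le i)

def splitEquiv (L j : ℕ) (hj : j ≤ L) :
    {g : NestingFun (L + 1) // g.toFun 0 = j} ≃ NestingFun j × NestingFun (L - j) where
  toFun g :=
    (⟨_, g.1.isNesting.shiftRestrict (a := 1) (by omega) fun i hi hij => by
        have := (g.1.isNesting 0 (by omega)).2 i (by omega) (by rw [g.2]; omega)
        rw [g.2] at this; omega,
      fun _ hi => shiftRestrict_of_le hi⟩,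
     ⟨_, g.1.isNesting.shiftRestrict (a := j + 1) (by omega) fun i _ hi => by
        have := (g.1.isNesting i (by omega)).1; omega,
      fun _ hi => shiftRestrict_of_le hi⟩)
  invFun p := ⟨⟨glueBlocks j p.1.toFun p.2.toFun,
      (show j + 1 + (L - j) = L + 1 by omega) ▸ p.1.isNesting.glueBlocks p.2.isNesting,
      fun i hi => by rw [glueBlocks_of_lt (by omega)]; exact p.2.eq_zero _ (by omega)⟩,
    glueBlocks_zero (u := p.1.toFun) (v := p.2.toFun)⟩
  left_inv g := by
    refine Subtype.ext <| NestingFun.ext <| funext fun k => ?_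
    dsimp only
    rcases Nat.eq_zero_or_pos k with rfl | hk
    · exact glueBlocks_zero.trans g.2.symm
    by_cases hkj : k ≤ j
    · rw [glueBlocks_of_le hk hkj, shiftRestrict_of_lt (by omega)]
      congr 1; omega
    by_cases hkL : k ≤ L
    · rw [glueBlocks_of_lt (by omega), shiftRestrict_of_lt (by omega)]
      congr 1; omega
    · rw [glueBlocks_of_lt (by omega), shiftRestrict_of_le (by omega), g.1.eq_zero k (by omega)]
  right_inv p := by
    refine Prod.ext (NestingFun.ext <| funext fun i => ?_) (NestingFun.ext <| funext fun i => ?_)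
    · dsimp only
      by_cases hi : i < j
      · rw [shiftRestrict_of_lt hi, glueBlocks_of_le (by omega) (by omega)]
        congr 1; omega
      · rw [shiftRestrict_of_le (by omega), p.1.eq_zero i (by omega)]
    · dsimp only
      by_cases hi : i < L - j
      · rw [shiftRestrict_of_lt hi, glueBlocks_of_lt (by omega)]
        congr 1; omega
      · rw [shiftRestrict_of_le (by omega), p.2.eq_zero i (by omega)]

theorem card_eq_catalan (L : ℕ) : Nat.card (NestingFun L) = catalan L := by
  induction L using Nat.strong_induction_on with
  | _ L ih =>
    rcases L with _ | L
    · rw [Nat.card_unique, catalan_zero]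
    · rw [← Nat.card_congr (Equiv.sigmaFiberEquiv fun g : NestingFun (L + 1) =>
          (⟨g.toFun 0, by have := (g.isNesting 0 (by omega)).1; omega⟩ : Fin (L + 1))),
        Nat.card_sigma, catalan_succ]
      refine Finset.sum_congr rfl fun j _ => ?_
      rw [← ih j (by omega), ← ih (L - j) (by omega), ← Nat.card_prod,
        ← Nat.card_congr (splitEquiv L j (by omega))]
      exact Nat.card_congr (Equiv.subtypeEquivRight fun g => Fin.ext_iff)

end NestingFun

def lexKey (τ : ℤ → WithTop ℤ) (x : ℤ) : WithTop ℤ ×ₗ ℤ := toLex (τ x, -x)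

lemma lexKey_injective (τ : ℤ → WithTop ℤ) : Function.Injective (lexKey τ) := fun x y hxy => by
  simpa [lexKey] using congrArg (fun p => (ofLex p).2) hxy

/-- `τ x = ⊤` encodes `x + n ≼ x`; otherwise the integers to the right of `x` lying below `x`
form the interval `(x, τ x]`. -/
structure IsNestedTop (n : ℕ) (τ : ℤ → WithTop ℤ) : Prop where
  add_period : ∀ x, τ (x + n) = τ x + (n : ℤ)
  le_self : ∀ x : ℤ, (x : WithTop ℤ) ≤ τ x
  nested : ∀ x y : ℤ, x < y → (y : WithTop ℤ) ≤ τ x → τ y ≤ τ x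

section Periodic

variable {n : ℕ} {τ τ' : ℤ → WithTop ℤ}

lemma add_mul_of_add_period (hτ : ∀ x, τ (x + n) = τ x + (n : ℤ)) (x k : ℤ) :
    τ (x + k * n) = τ x + ↑(k * n) := by
  induction k using Int.induction_on with
  | zero => simp
  | succ k ih =>
    rw [show x + (k + 1) * n = x + k * n + n by ring, hτ, ih, add_assoc, ← WithTop.coe_add]
    ring_nf
  | pred k ih =>
    rw [show x + -k * n = x + (-k - 1) * n + n by ring, hτ] at ih
    rw [← WithTop.add_right_inj (WithTop.coe_ne_top (a := (n : ℤ))), ih, add_assoc,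
      ← WithTop.coe_add]
    ring_nf

lemma eq_of_eqOn_Ico (hn : 0 < n) (hτ : ∀ x, τ (x + n) = τ x + (n : ℤ))
    (hτ' : ∀ x, τ' (x + n) = τ' x + (n : ℤ)) (a : ℤ) (h : Set.EqOn τ τ' (Set.Ico a (a + n))) :
    τ = τ' := by
  funext x
  have hx : x = (a + (x - a) % n) + (x - a) / n * n := by
    have := Int.emod_add_mul_ediv (x - a) n; linarith [mul_comm ((x - a) / n) (n : ℤ)]
  rw [hx, add_mul_of_add_period hτ, add_mul_of_add_period hτ', h]
  constructor
  · linarith [Int.emod_nonneg (x - a) (by omega : (n : ℤ) ≠ 0)]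
  · linarith [Int.emod_lt_of_pos (x - a) (by omega : (0 : ℤ) < n)]

end Periodic

section Window

variable {n : ℕ} {r : ℤ}

lemma not_add_modEq_self {d : ℤ} (hd : 0 < d) (hdn : d < n) : ¬ r + d ≡ r [ZMOD n] := by
  rw [Int.modEq_iff_dvd, show r - (r + d) = -d by ring, Int.dvd_neg]
  exact fun hdvd => absurd (Int.le_of_dvd hd hdvd) (by omega)

lemma modEq_iff_emod_sub_one (hn : 0 < n) (x : ℤ) :
    x ≡ r [ZMOD n] ↔ (x - r - 1) % n = n - 1 := by
  have : (x - r - 1) % n = n - 1 ↔ x - r - 1 ≡ n - 1 [ZMOD n] := by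
    rw [Int.ModEq, Int.emod_eq_of_lt (a := (n : ℤ) - 1) (b := n) (by omega) (by omega)]
  rw [this, Int.modEq_iff_dvd, Int.modEq_iff_dvd,
    show (n : ℤ) - 1 - (x - r - 1) = r - x + n by ring, dvd_add_left (dvd_refl _)]

/-- `(x - r - 1) % n` is the position of `x` in its window `r + 1, …, r + n`, whose last
position is the class of `r`. -/
def windowTop (n : ℕ) (r : ℤ) (g : ℕ → ℕ) (x : ℤ) : WithTop ℤ :=
  if x ≡ r [ZMOD n] then ⊤ else ↑(x + g ((x - r - 1) % n).toNat)

variable {g : ℕ → ℕ}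

lemma windowTop_eq_top_iff {x : ℤ} : windowTop n r g x = ⊤ ↔ x ≡ r [ZMOD n] := by
  by_cases hx : x ≡ r [ZMOD n] <;> simp [windowTop, hx]

lemma windowTop_add_one_add {e : ℕ} (he : e < n - 1) :
    windowTop n r g (r + 1 + e) = ↑(r + 1 + e + g e) := by
  have hne : ¬ r + 1 + e ≡ r [ZMOD n] := by
    rw [add_assoc]; exact not_add_modEq_self (by omega) (by omega)
  rw [windowTop, if_neg hne, show r + 1 + e - r - 1 = e by ring,
    Int.emod_eq_of_lt (by omega) (by omega), Int.toNat_natCast]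

lemma isNestedTop_windowTop (hn : 0 < n) (hg : IsNesting (n - 1) g) :
    IsNestedTop n (windowTop n r g) where
  add_period x := by
    have hmod : x + n ≡ r [ZMOD n] ↔ x ≡ r [ZMOD n] :=
      ⟨(Int.add_modEq_right).symm.trans, (Int.add_modEq_right).trans⟩
    unfold windowTop
    rw [show x + n - r - 1 = x - r - 1 + n by ring, Int.add_emod_right]
    by_cases hx : x ≡ r [ZMOD n]
    · simp [hx, hmod]
    · simp only [hmod, hx, if_false, ← WithTop.coe_add]
      ring_nf
  le_self x := by
    unfold windowTop; split_ifs
    · exact le_top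
    · exact WithTop.coe_le_coe.mpr (by omega)
  nested x y hxy hy := by
    by_cases hx : x ≡ r [ZMOD n]
    · rw [windowTop_eq_top_iff.mpr hx]; exact le_top
    rw [windowTop, if_neg hx, WithTop.coe_le_coe] at hy
    have hen := (modEq_iff_emod_sub_one hn x).not.mp hx
    have h0 := Int.emod_nonneg (x - r - 1) (by omega : (n : ℤ) ≠ 0)
    have h1 := Int.emod_lt_of_pos (x - r - 1) (by omega : (0 : ℤ) < n)
    set e := (x - r - 1) % n with he
    have hge := hg e.toNat (by omega)
    have hey : (y - r - 1) % n = e + (y - x) := by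
      rw [show y - r - 1 = (x - r - 1) + (y - x) by ring, ← Int.emod_add_emod, ← he,
        Int.emod_eq_of_lt (by omega) (by omega)]
    have hy' : ¬ y ≡ r [ZMOD n] := by rw [modEq_iff_emod_sub_one hn]; omega
    have := hge.2 (e + (y - x)).toNat (by omega) (by omega)
    rw [windowTop, windowTop, if_neg hx, if_neg hy', hey, ← he, WithTop.coe_le_coe]
    omega

end Window

namespace TITO

variable {n : ℕ}

theorem ext {t t' : TITO n} (h : t.rel = t'.rel) : t = t' := by
  cases t; cases t'; cases h; rfl

section Basic

variable (t : TITO n)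

lemma rel_add_mul_iff (a b k : ℤ) : t.rel (a + k * n) (b + k * n) ↔ t.rel a b := by
  induction k using Int.induction_on with
  | zero => simp
  | succ k ih => rw [← ih, t.invariant (a + k * n)]; ring_nf
  | pred k ih => rw [← ih, t.invariant (a + (-k - 1) * n)]; ring_nf

open Classical in
noncomputable def reach (a : ℤ) : ℕ := Nat.findGreatest (fun d => t.rel (a + d) a) (n - 1)

open Classical in
lemma reach_le (a : ℤ) : t.reach a ≤ n - 1 := Nat.findGreatest_le _

open Classical in
lemma rel_add_reach (a : ℤ) : t.rel (a + t.reach a) a :=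
  Nat.findGreatest_spec (P := fun d : ℕ => t.rel (a + d) a) (Nat.zero_le _)
    (by simpa using t.refl a)

lemma reach_add (a : ℤ) : t.reach (a + n) = t.reach a := by
  unfold reach
  congr 1
  ext d
  rw [add_right_comm, ← t.invariant]

open Classical in
noncomputable def top (a : ℤ) : WithTop ℤ := if t.rel (a + n) a then ⊤ else ↑(a + t.reach a)

lemma top_eq_top_iff {a : ℤ} : t.top a = ⊤ ↔ t.rel (a + n) a := by
  by_cases ha : t.rel (a + n) a <;> simp [top, ha]

lemma top_of_not_rel {a : ℤ} (ha : ¬ t.rel (a + n) a) : t.top a = ↑(a + t.reach a) := if_neg ha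

lemma top_add (a : ℤ) : t.top (a + n) = t.top a + (n : ℤ) := by
  have hrel : t.rel (a + n + n) (a + n) ↔ t.rel (a + n) a := (t.invariant _ _).symm
  by_cases ha : t.rel (a + n) a
  · simp [top, ha, hrel]
  · simp only [top, ha, hrel, t.reach_add, if_false, ← WithTop.coe_add]
    ring_nf

end Basic

namespace Avoids312

variable {t : TITO n}

lemma rel_of_lt_of_lt (h : t.Avoids312) {a b c : ℤ} (hab : a < b) (hbc : b < c)
    (hca : t.rel c a) : t.rel b a :=
  (t.total a b).resolve_left fun hab' => h ⟨a, b, c, hab, hbc, hca, hab'⟩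

lemma rel_add_of_rel (h : t.Avoids312) {a b : ℤ} (hb : a + n ≤ b) (hba : t.rel b a) :
    t.rel (a + n) a := by
  rcases hb.eq_or_lt with rfl | hlt
  · exact hba
  rcases Nat.eq_zero_or_pos n with rfl | hn
  · simpa using t.refl a
  exact h.rel_of_lt_of_lt (by omega) hlt hba

lemma rel_of_rel_add_of_lt (h : t.Avoids312) (hn : 0 < n) {a b : ℤ} (ha : t.rel (a + n) a)
    (hab : a < b) : t.rel b a := by
  suffices ∀ k : ℕ, ∀ b, a < b → b ≤ a + k * n → t.rel b a from
    this (b - a).toNat b hab (by nlinarith [Int.self_le_toNat (b - a)])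
  intro k
  induction k with
  | zero => intro b hab hb; omega
  | succ k ih =>
    intro b hab hb
    rcases le_or_gt b (a + n) with hbn | hbn
    · rcases hbn.eq_or_lt with rfl | hlt
      · exact ha
      · exact h.rel_of_lt_of_lt hab hlt ha
    · have : t.rel (b - n) a := ih (b - n) (by omega) (by push_cast at hb; linarith)
      exact t.trans _ _ _ (by simpa using (t.invariant _ _).mp this) ha

lemma rel_of_not_rel_add_of_rel_add (h : t.Avoids312) {a s : ℤ} (ha : ¬ t.rel (a + n) a)
    (hs : t.rel (s + n) s) : t.rel a s := by
  have hn : 0 < n := Nat.pos_of_ne_zero fun hn => ha (by simpa [hn] using t.refl a)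
  rcases lt_trichotomy a s with has | rfl | hsa
  · by_contra has'
    have hsa := (t.total a s).resolve_left has'
    rcases le_or_gt (a + n) s with hs' | hs'
    · exact ha (h.rel_add_of_rel hs' hsa)
    · exact ha (t.trans _ _ _ (h.rel_of_rel_add_of_lt hn hs hs') hsa)
  · exact absurd hs ha
  · exact h.rel_of_rel_add_of_lt hn hs hsa

lemma rel_iff_le_add_reach (h : t.Avoids312) {a b : ℤ} (ha : ¬ t.rel (a + n) a) (hab : a < b) :
    t.rel b a ↔ b ≤ a + t.reach a := by
  classical
  constructor
  · intro hba
    have hb : b < a + n := by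
      by_contra! hb
      exact ha (h.rel_add_of_rel hb hba)
    have : (b - a).toNat ≤ t.reach a :=
      Nat.le_findGreatest (P := fun d : ℕ => t.rel (a + d) a) (by omega) (by
        rwa [Int.toNat_of_nonneg (by omega), add_sub_cancel])
    omega
  · intro hb
    rcases hb.eq_or_lt with rfl | hlt
    · exact t.rel_add_reach a
    · exact h.rel_of_lt_of_lt hab hlt (t.rel_add_reach a)

lemma isNestedTop_top (h : t.Avoids312) : IsNestedTop n t.top where
  add_period := t.top_add
  le_self x := by
    unfold top; split_ifs
    · exact le_top
    · exact WithTop.coe_le_coe.mpr (by omega)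
  nested x y hxy hy := by
    by_cases hx : t.rel (x + n) x
    · rw [t.top_eq_top_iff.mpr hx]; exact le_top
    rw [t.top_of_not_rel hx, WithTop.coe_le_coe] at hy
    rw [t.top_of_not_rel hx]
    have hyx : t.rel y x := (h.rel_iff_le_add_reach hx hxy).mpr hy
    have hy' : ¬ t.rel (y + n) y := fun hy' =>
      hxy.ne (t.antisymm _ _ (h.rel_of_not_rel_add_of_rel_add hx hy') hyx)
    rw [t.top_of_not_rel hy', WithTop.coe_le_coe]
    exact (h.rel_iff_le_add_reach hx (by omega)).mp (t.trans _ _ _ (t.rel_add_reach y) hyx)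

lemma lexKey_le_of_rel (h : t.Avoids312) (hn : 0 < n) {x y : ℤ} (hxy : t.rel x y) :
    lexKey t.top x ≤ lexKey t.top y := by
  rcases eq_or_ne x y with rfl | hne
  · exact le_rfl
  have hyx : ¬ t.rel y x := fun hyx => hne (t.antisymm _ _ hxy hyx)
  simp only [lexKey, Prod.Lex.toLex_le_toLex]
  by_cases hx : t.rel (x + n) x <;> by_cases hy : t.rel (y + n) y
  · rw [t.top_eq_top_iff.mpr hx, t.top_eq_top_iff.mpr hy]
    refine Or.inr ⟨rfl, neg_le_neg (not_lt.mp fun hlt => hyx ?_)⟩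
    exact h.rel_of_rel_add_of_lt hn hx hlt
  · exact absurd (h.rel_of_not_rel_add_of_rel_add hy hx) hyx
  · rw [t.top_eq_top_iff.mpr hy, t.top_of_not_rel hx]
    exact Or.inl (WithTop.coe_lt_top _)
  · rcases hne.lt_or_gt with hlt | hlt
    · have := (h.rel_iff_le_add_reach hx hlt).not.mp hyx
      rw [t.top_of_not_rel hx, t.top_of_not_rel hy, WithTop.coe_lt_coe]
      omega
    · have hle := (h.isNestedTop_top).nested y x hlt (by
        rw [t.top_of_not_rel hy, WithTop.coe_le_coe]
        exact (h.rel_iff_le_add_reach hy hlt).mp hxy)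
      rcases hle.lt_or_eq with hlt' | heq
      · exact Or.inl hlt'
      · exact Or.inr ⟨heq, by omega⟩

lemma rel_iff_lexKey_le (h : t.Avoids312) (hn : 0 < n) {x y : ℤ} :
    t.rel x y ↔ lexKey t.top x ≤ lexKey t.top y := by
  refine ⟨h.lexKey_le_of_rel hn, fun hle => ?_⟩
  by_contra hxy
  have := h.lexKey_le_of_rel hn ((t.total x y).resolve_left hxy)
  exact hxy (lexKey_injective _ (le_antisymm hle this) ▸ t.refl x)

end Avoids312

def ofTop (τ : ℤ → WithTop ℤ) (hτ : ∀ x, τ (x + n) = τ x + (n : ℤ)) : TITO n where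
  rel x y := lexKey τ x ≤ lexKey τ y
  refl _ := le_rfl
  antisymm _ _ hxy hyx := lexKey_injective τ (le_antisymm hxy hyx)
  trans _ _ _ := le_trans
  total _ _ := le_total _ _
  invariant x y := by
    simp only [lexKey, Prod.Lex.toLex_le_toLex, hτ,
      WithTop.add_lt_add_iff_right WithTop.coe_ne_top, WithTop.add_right_inj WithTop.coe_ne_top,
      neg_add, add_le_add_iff_right]

section OfTop

variable {τ : ℤ → WithTop ℤ} (hτ : IsNestedTop n τ)

lemma ofTop_rel_iff_of_le {b x : ℤ} (hxb : x ≤ b) :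
    (ofTop τ hτ.add_period).rel b x ↔ τ b ≤ τ x := by
  change lexKey τ b ≤ lexKey τ x ↔ _
  simp only [lexKey, Prod.Lex.toLex_le_toLex, neg_le_neg_iff, hxb, and_true,
    le_iff_lt_or_eq (a := τ b)]

lemma avoids312_ofTop : (ofTop τ hτ.add_period).Avoids312 := by
  rintro ⟨a, b, c, hab, hbc, hca, hab'⟩
  have hca : τ c ≤ τ a := (ofTop_rel_iff_of_le hτ (by omega)).mp hca
  have hab' : τ a < τ b := by
    change lexKey τ a ≤ lexKey τ b at hab'
    simp only [lexKey, Prod.Lex.toLex_le_toLex, neg_le_neg_iff] at hab'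
    exact hab'.resolve_right fun h => by omega
  have hba : τ b ≤ τ a := hτ.nested a b hab
    (le_trans (WithTop.coe_le_coe.mpr hbc.le) ((hτ.le_self c).trans hca))
  exact absurd hab' (not_lt.mpr hba)

lemma top_ofTop (hn : 0 < n) : (ofTop τ hτ.add_period).top = τ := by
  funext x
  set t := ofTop τ hτ.add_period
  rcases eq_or_ne (τ x) ⊤ with hx | hx
  · rw [hx, t.top_eq_top_iff, ofTop_rel_iff_of_le hτ (by omega), hx]
    exact le_top
  obtain ⟨v, hv⟩ := WithTop.ne_top_iff_exists.mp hx
  have hnot : ¬ t.rel (x + n) x := by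
    rw [ofTop_rel_iff_of_le hτ (by omega), hτ.add_period, ← hv, ← WithTop.coe_add,
      WithTop.coe_le_coe]
    omega
  have hxv : x ≤ v := WithTop.coe_le_coe.mp (hv ▸ hτ.le_self x)
  have h312 := avoids312_ofTop hτ
  rw [t.top_of_not_rel hnot, ← hv, WithTop.coe_inj]
  -- `x + reach x ≼ x` gives `τ (x + reach x) ≤ v`, and `v ≼ x` since `τ v ≤ τ x`.
  apply le_antisymm
  · rcases Nat.eq_zero_or_pos (t.reach x) with h0 | hpos
    · rw [h0]; omega
    have := (ofTop_rel_iff_of_le hτ (by omega)).mp (t.rel_add_reach x)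
    exact WithTop.coe_le_coe.mp (((hτ.le_self _).trans this).trans_eq hv.symm)
  · rcases hxv.eq_or_lt with rfl | hlt
    · omega
    refine (h312.rel_iff_le_add_reach hnot hlt).mp ((ofTop_rel_iff_of_le hτ hlt.le).mpr ?_)
    exact hτ.nested x v hlt (hv ▸ le_rfl)

end OfTop

lemma eq_of_top_eq (hn : 0 < n) {t t' : TITO n} (h : t.Avoids312) (h' : t'.Avoids312)
    (htop : t.top = t'.top) : t = t' :=
  ext <| funext₂ fun x y => propext <| by rw [h.rel_iff_lexKey_le hn, h'.rel_iff_lexKey_le hn, htop]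

lemma finite_avoids312 (hn : 0 < n) : Finite {t : TITO n // t.Avoids312} := by
  refine Finite.of_injective (fun t (i : Fin n) =>
    (t.1.rel (i + n) i, (⟨t.1.reach i, by have := t.1.reach_le i; omega⟩ : Fin n))) ?_
  intro t t' h
  refine Subtype.ext (eq_of_top_eq hn t.2 t'.2
    (eq_of_eqOn_Ico hn t.1.top_add t'.1.top_add 0 fun x ⟨hx0, hxn⟩ => ?_))
  obtain ⟨hrel, hreach⟩ := Prod.ext_iff.mp (congrFun h ⟨x.toNat, by omega⟩)
  simp only [Int.toNat_of_nonneg hx0, Fin.mk.injEq] at hrel hreach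
  by_cases hx : t.1.rel (x + n) x
  · rw [t.1.top_eq_top_iff.mpr hx, t'.1.top_eq_top_iff.mpr (hrel ▸ hx)]
  · rw [t.1.top_of_not_rel hx, t'.1.top_of_not_rel (hrel ▸ hx), hreach]

section Real

variable {t : TITO n}

lemma mem_residueClass_iff {a x : ℤ} :
    x ∈ {x : ℤ | ∃ k : ℤ, x = a + k * n} ↔ x ≡ a [ZMOD n] := by
  rw [Int.modEq_comm, Int.modEq_iff_add_fac]
  simp only [Set.mem_ofPred_eq, mul_comm]

lemma rel_add_of_modEq {a x : ℤ} (ha : t.rel (a + n) a) (hx : x ≡ a [ZMOD n]) :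
    t.rel (x + n) x := by
  obtain ⟨k, rfl⟩ := mem_residueClass_iff.mpr hx
  rw [show a + k * n + n = a + n + k * n by ring, t.rel_add_mul_iff]
  exact ha

lemma Avoids312.not_isReal_iff (h : t.Avoids312) (hn : 0 < n) :
    ¬ t.IsReal ↔ ∃ r : ℤ, ∀ x, t.rel (x + n) x ↔ x ≡ r [ZMOD n] := by
  constructor
  · intro hreal
    simp only [IsReal, not_forall] at hreal
    obtain ⟨a, hconv, ha⟩ := hreal
    have ha : t.rel (a + n) a := (t.total _ _).resolve_left ha
    refine ⟨a, fun x => ⟨fun hx => ?_, fun hx => rel_add_of_modEq ha hx⟩⟩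
    -- `x` lies between the consecutive members `u ≤ x < u + n` of the class of `a`.
    set u := a + (x - a) / n * n
    have hu : u ≡ a [ZMOD n] := mem_residueClass_iff.mp ⟨_, rfl⟩
    have hux : u ≤ x ∧ x < u + n := by
      have := Int.emod_add_mul_ediv (x - a) n
      have := Int.emod_nonneg (x - a) (by omega : (n : ℤ) ≠ 0)
      have := Int.emod_lt_of_pos (x - a) (by omega : (0 : ℤ) < n)
      constructor <;> linarith [mul_comm ((x - a) / n) (n : ℤ)]
    have hxu : t.rel x u := by
      rcases hux.1.eq_or_lt with heq | hlt
      · exact heq ▸ t.refl u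
      · exact h.rel_of_rel_add_of_lt hn (rel_add_of_modEq ha hu) hlt
    exact mem_residueClass_iff.mp (hconv (u + n) (mem_residueClass_iff.mpr
      ((Int.add_modEq_right).trans hu)) u (mem_residueClass_iff.mpr hu) x
      (h.rel_of_rel_add_of_lt hn hx hux.2) hxu)
  · rintro ⟨r, hr⟩ hreal
    have hconv : t.OrderConvex {x : ℤ | ∃ k : ℤ, x = r + k * n} := by
      intro x hx z _ y hxy _
      by_contra hy
      rw [mem_residueClass_iff, ← hr] at hx hy
      exact hy (t.antisymm x y hxy (h.rel_of_not_rel_add_of_rel_add hy hx) ▸ hx)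
    have := t.antisymm _ _ (hreal r hconv) ((hr r).mpr Int.ModEq.rfl)
    omega

end Real

section Classification

noncomputable def ofWindow (hn : 0 < n) (p : Fin n × NestingFun (n - 1)) : TITO n :=
  ofTop (windowTop n p.1 p.2.toFun) (isNestedTop_windowTop hn p.2.isNesting).add_period

lemma top_ofWindow (hn : 0 < n) (p : Fin n × NestingFun (n - 1)) :
    (ofWindow hn p).top = windowTop n p.1 p.2.toFun :=
  top_ofTop (isNestedTop_windowTop hn p.2.isNesting) hn

lemma avoids312_ofWindow (hn : 0 < n) (p : Fin n × NestingFun (n - 1)) :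
    (ofWindow hn p).Avoids312 :=
  avoids312_ofTop (isNestedTop_windowTop hn p.2.isNesting)

lemma not_isReal_ofWindow (hn : 0 < n) (p : Fin n × NestingFun (n - 1)) :
    ¬ (ofWindow hn p).IsReal :=
  (avoids312_ofWindow hn p).not_isReal_iff hn |>.mpr ⟨p.1, fun x => by
    rw [← top_eq_top_iff, top_ofWindow hn, windowTop_eq_top_iff]⟩

lemma ofWindow_injective (hn : 0 < n) : Function.Injective (ofWindow hn) := by
  rintro ⟨r, g⟩ ⟨r', g'⟩ h
  have htop := congrArg top h
  simp only [top_ofWindow hn] at htop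
  have hr : r = r' := by
    have := windowTop_eq_top_iff.mp ((congrFun htop r).symm.trans (windowTop_eq_top_iff.mpr rfl))
    rw [Int.ModEq, Int.emod_eq_of_lt (by omega) (by omega),
      Int.emod_eq_of_lt (by omega) (by omega)] at this
    exact Fin.ext (by exact_mod_cast this)
  subst hr
  refine Prod.ext rfl (NestingFun.ext (funext fun e => ?_))
  by_cases he : e < n - 1
  · have := congrFun htop (r + 1 + e)
    rw [windowTop_add_one_add he, windowTop_add_one_add he, WithTop.coe_inj] at this
    simpa using this
  · rw [g.eq_zero e (by omega), g'.eq_zero e (by omega)]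

variable {t : TITO n} {r : ℤ}

noncomputable def windowReach (t : TITO n) (r : ℤ) (e : ℕ) : ℕ :=
  if e < n - 1 then t.reach (r + 1 + e) else 0

lemma top_add_one_add (hr : ∀ x, t.top x = ⊤ ↔ x ≡ r [ZMOD n]) {e : ℕ} (he : e < n - 1) :
    t.top (r + 1 + e) = ↑(r + 1 + e + t.windowReach r e) := by
  have hne : ¬ r + 1 + e ≡ r [ZMOD n] := by
    rw [add_assoc]; exact not_add_modEq_self (by omega) (by omega)
  rw [windowReach, if_pos he, top_of_not_rel]
  rwa [← top_eq_top_iff, hr]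

lemma Avoids312.isNesting_windowReach (h : t.Avoids312)
    (hr : ∀ x, t.top x = ⊤ ↔ x ≡ r [ZMOD n]) : IsNesting (n - 1) (t.windowReach r) := by
  intro i hi
  have hnest := h.isNestedTop_top.nested (r + 1 + i)
  have hi' := top_add_one_add hr hi
  have hbound : i + t.windowReach r i < n - 1 := by
    by_contra! hlt
    have := hnest (r + n) (by omega) (by rw [hi', WithTop.coe_le_coe]; omega)
    rw [(hr _).mpr Int.add_modEq_right, hi'] at this
    exact WithTop.coe_ne_top (top_le_iff.mp this)
  refine ⟨hbound, fun j hij hj => ?_⟩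
  have := hnest (r + 1 + j) (by omega) (by rw [hi', WithTop.coe_le_coe]; omega)
  rw [hi', top_add_one_add hr (by omega), WithTop.coe_le_coe] at this
  omega

lemma Avoids312.windowTop_windowReach (hn : 0 < n) (h : t.Avoids312)
    (hr : ∀ x, t.top x = ⊤ ↔ x ≡ r [ZMOD n]) : windowTop n r (t.windowReach r) = t.top := by
  refine eq_of_eqOn_Ico hn (isNestedTop_windowTop hn (h.isNesting_windowReach hr)).add_period
    t.top_add (r + 1) fun x ⟨hx1, hx2⟩ => ?_
  rcases eq_or_ne x (r + n) with rfl | hx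
  · rw [windowTop_eq_top_iff.mpr Int.add_modEq_right, (hr _).mpr Int.add_modEq_right]
  obtain ⟨e, rfl⟩ : ∃ e : ℕ, x = r + 1 + e := ⟨(x - r - 1).toNat, by omega⟩
  rw [windowTop_add_one_add (by omega), top_add_one_add hr (by omega)]

lemma Avoids312.exists_ofWindow_eq (hn : 0 < n) (h : t.Avoids312) (hnr : ¬ t.IsReal) :
    ∃ p, ofWindow hn p = t := by
  obtain ⟨r₀, hr₀⟩ := (h.not_isReal_iff hn).mp hnr
  have hr₀n : 0 ≤ r₀ % n ∧ r₀ % n < n :=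
    ⟨Int.emod_nonneg _ (by omega), Int.emod_lt_of_pos _ (by omega)⟩
  let r : Fin n := ⟨(r₀ % n).toNat, by omega⟩
  have hr : ∀ x, t.top x = ⊤ ↔ x ≡ r [ZMOD n] := fun x => by
    rw [top_eq_top_iff, hr₀, show ((r : ℕ) : ℤ) = r₀ % n by simp [r, hr₀n.1]]
    exact ⟨fun hx => hx.trans (Int.mod_modEq _ _).symm, fun hx => hx.trans (Int.mod_modEq _ _)⟩
  refine ⟨(r, ⟨t.windowReach r, h.isNesting_windowReach hr, fun e he => if_neg (by omega)⟩), ?_⟩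
  exact eq_of_top_eq hn (avoids312_ofWindow hn _) h
    ((top_ofWindow hn _).trans (h.windowTop_windowReach hn hr))

theorem card_avoids312_not_isReal (hn : 0 < n) :
    Nat.card {t : TITO n // t.Avoids312 ∧ ¬ t.IsReal} = n * catalan (n - 1) := by
  let f (p : Fin n × NestingFun (n - 1)) : {t : TITO n // t.Avoids312 ∧ ¬ t.IsReal} :=
    ⟨ofWindow hn p, avoids312_ofWindow hn p, not_isReal_ofWindow hn p⟩
  have hf : Function.Bijective f := by
    refine ⟨fun p q h => ofWindow_injective hn (congrArg Subtype.val h), fun t => ?_⟩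
    obtain ⟨p, hp⟩ := t.2.1.exists_ofWindow_eq hn t.2.2
    exact ⟨p, Subtype.ext hp⟩
  rw [← Nat.card_eq_of_bijective f hf, Nat.card_prod, Nat.card_fin, NestingFun.card_eq_catalan]

end Classification

end TITO

theorem stmt16 (n : ℕ) (hn : 2 ≤ n) :
    Nat.card {t : TITO n // t.Avoids312} =
      Nat.card {t : TITO n // t.Avoids312 ∧ t.IsReal} + n * catalan (n - 1) := by
  have hn : 0 < n := by omega
  have := TITO.finite_avoids312 hn
  rw [← TITO.card_avoids312_not_isReal hn, Nat.card_and_add_card_and_not]
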